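/- Let G be a 2-connected graph and x a vertex of G. If every vertex y ≠ x has degree d(y) ≥ δ, then for every two distinct vertices u and v of G there is a uv-path in G of order at least δ + 1. -/

import Mathlib

open SimpleGraph

/-- `G` is 2-connected: it has at least 3 vertices, is connected, and remains connected
after deleting any single vertex. -/
def TwoConnected {V : Type*} [Fintype V] (G : SimpleGraph V) : Prop :=
  3 ≤ Fintype.card V ∧ G.Connected ∧
    ∀ v : V, ((⊤ : G.Subgraph).deleteVerts {v}).coe.Connected

/-!
We prove, by induction on `s.ncard`, the stronger `SimpleGraph.HasLongPaths`: if `s` induces a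
2-connected graph and every vertex of `s` other than `u`, `v`, `x` has at least `k` neighbours
in `s`, then `u` and `v` are joined inside `s` by a path of length at least `min k (|s| - 1)`.

If `s \ {u}` is still 2-connected, prepend `u` to a long path in `s \ {u}` that starts at a
neighbour of `u`: degrees drop by at most one. Otherwise `s \ {u}` has a cut vertex `c`. If a
component `D` of `s \ {u, c}` misses `v` and is not `{x}`, then `D ∪ {u, c}` together with the
virtual edge `uc` is 2-connected and smaller than `s`, and a vertex of `D` other than `x` keeps
all its `≥ k` neighbours in it. Induction gives a `u`-`c` path of length `≥ k`, which is too long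
to be the virtual edge, and it continues from `c` to `v` outside `D`. In the remaining case `{x}`
is a component of `s \ {u, c}`, so `x` is adjacent to `u` but not to `v`; the same argument at
`v` makes `x` adjacent to `v`, a contradiction.
-/

theorem Set.exists_ne_ne_of_three_le_ncard {α : Type*} {s : Set α} (hs : 3 ≤ s.ncard)
    (a b : α) : ∃ c ∈ s, c ≠ a ∧ c ≠ b := by
  by_contra! h
  have hsub : s ⊆ {a, b} := fun c hc => (em (c = a)).imp id (h c hc)
  have := (Set.ncard_le_ncard hsub).trans (Set.ncard_insert_le a {b})
  rw [Set.ncard_singleton] at this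
  omega

namespace SimpleGraph

variable {V : Type*} (G : SimpleGraph V)

def ReachableIn (s : Set V) (a b : V) : Prop :=
  ∃ p : G.Walk a b, ∀ z ∈ p.support, z ∈ s

def PreconnectedOn (s : Set V) : Prop :=
  ∀ a ∈ s, ∀ b ∈ s, G.ReachableIn s a b

def TwoConnectedOn (s : Set V) : Prop :=
  3 ≤ s.ncard ∧ G.PreconnectedOn s ∧ ∀ c ∈ s, G.PreconnectedOn (s \ {c})

def componentIn (s : Set V) (a : V) : Set V :=
  {b | G.ReachableIn s a b}

def HasLongPaths (s : Set V) (x : V) : Prop :=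
  ∀ (k : ℕ) (u v : V), u ∈ s → v ∈ s → u ≠ v →
    (∀ y ∈ s, y ≠ u → y ≠ v → y ≠ x → k ≤ (G.neighborSet y ∩ s).ncard) →
    ∃ p : G.Walk u v, p.IsPath ∧ (∀ z ∈ p.support, z ∈ s) ∧ min k (s.ncard - 1) ≤ p.length

variable {G} {H : SimpleGraph V} {s t A B D : Set V} {a b c d e u v w x : V} {k : ℕ}

namespace ReachableIn

theorem refl (ha : a ∈ s) : G.ReachableIn s a a :=
  ⟨.nil, by simpa⟩

theorem symm : G.ReachableIn s a b → G.ReachableIn s b a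
  | ⟨p, hp⟩ => ⟨p.reverse, by simpa using hp⟩

theorem trans : G.ReachableIn s a b → G.ReachableIn s b c → G.ReachableIn s a c
  | ⟨p, hp⟩, ⟨q, hq⟩ => ⟨p.append q, by
      simp only [Walk.mem_support_append_iff]
      rintro z (hz | hz)
      exacts [hp z hz, hq z hz]⟩

theorem mono (hst : s ⊆ t) : G.ReachableIn s a b → G.ReachableIn t a b
  | ⟨p, hp⟩ => ⟨p, fun z hz => hst (hp z hz)⟩

theorem mono_graph (hGH : G ≤ H) : G.ReachableIn s a b → H.ReachableIn s a b
  | ⟨p, hp⟩ => ⟨p.mapLe hGH, by simpa [Walk.support_mapLe_eq_support] using hp⟩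

theorem of_adj (h : G.Adj a b) (ha : a ∈ s) (hb : b ∈ s) : G.ReachableIn s a b :=
  ⟨h.toWalk, by simp [ha, hb]⟩

theorem mem_right : G.ReachableIn s a b → b ∈ s
  | ⟨p, hp⟩ => hp b p.end_mem_support

theorem exists_adj (h : G.ReachableIn s a b) (hab : a ≠ b) : ∃ z ∈ s, G.Adj a z := by
  obtain ⟨p, hp⟩ := h
  cases p with
  | nil => exact absurd rfl hab
  | cons hadj _ => exact ⟨_, hp _ (by simp), hadj⟩

theorem exists_isPath (h : G.ReachableIn s a b) :
    ∃ p : G.Walk a b, p.IsPath ∧ ∀ z ∈ p.support, z ∈ s := by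
  classical
  obtain ⟨p, hp⟩ := h
  exact ⟨p.bypass, p.bypass_isPath, fun z hz => hp z (p.support_bypass_subset_support hz)⟩

theorem exists_exit (hA : ∀ p ∈ A, ∀ q ∈ s, G.Adj p q → q ∈ A ∨ q ∈ B)
    (h : G.ReachableIn s a b) (ha : a ∈ A) (hb : b ∉ A) :
    ∃ z ∈ B, G.ReachableIn (insert z A) a z := by
  obtain ⟨p, hp⟩ := h
  induction p with
  | nil => exact absurd ha hb
  | @cons a q b hadj p ih =>
    simp only [Walk.support_cons, List.mem_cons, forall_eq_or_imp] at hp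
    rcases hA a ha q (hp.2 q p.start_mem_support) hadj with hq | hq
    · obtain ⟨z, hz, hqz⟩ := ih hq hb hp.2
      exact ⟨z, hz, (of_adj hadj (Set.mem_insert_of_mem _ ha)
        (Set.mem_insert_of_mem _ hq)).trans hqz⟩
    · exact ⟨q, hq, of_adj hadj (Set.mem_insert_of_mem _ ha) (Set.mem_insert _ _)⟩

end ReachableIn

theorem PreconnectedOn.of_forall_reachableIn (h : ∀ e ∈ s, G.ReachableIn s e a) :
    G.PreconnectedOn s :=
  fun p hp q hq => (h p hp).trans (h q hq).symm

theorem PreconnectedOn.insert_of_adj (h : G.PreconnectedOn s) (ha : a ∈ s) (hac : G.Adj a c) :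
    G.PreconnectedOn (insert c s) := by
  refine .of_forall_reachableIn (a := a) fun e he => ?_
  rcases he with rfl | he
  · exact .of_adj hac.symm (Set.mem_insert _ _) (Set.mem_insert_of_mem _ ha)
  · exact (h e he a ha).mono (Set.subset_insert _ _)

theorem mem_componentIn_self (ha : a ∈ s) : a ∈ G.componentIn s a :=
  ReachableIn.refl ha

theorem componentIn_subset : G.componentIn s a ⊆ s :=
  fun _ h => h.mem_right

theorem mem_componentIn_of_adj (hb : b ∈ G.componentIn s a) (hc : c ∈ s) (hbc : G.Adj b c) :
    c ∈ G.componentIn s a :=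
  ReachableIn.trans hb (.of_adj hbc hb.mem_right hc)

theorem exists_isPath_cons (ha : a ∈ s) (hab : G.Adj a b) {q : G.Walk b c} (hq : q.IsPath)
    (hqs : ∀ z ∈ q.support, z ∈ s \ {a}) :
    ∃ p : G.Walk a c, p.IsPath ∧ (∀ z ∈ p.support, z ∈ s) ∧ p.length = q.length + 1 := by
  refine ⟨.cons hab q, hq.cons fun ha' => (hqs a ha').2 rfl, ?_, rfl⟩
  simp only [Walk.support_cons, List.mem_cons, forall_eq_or_imp]
  exact ⟨ha, fun z hz => (hqs z hz).1⟩

theorem Walk.IsPath.append {p : G.Walk a b} {q : G.Walk b c} (hp : p.IsPath) (hq : q.IsPath)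
    (h : ∀ z ∈ p.support, z ∈ q.support → z = b) : (p.append q).IsPath := by
  rw [Walk.isPath_def, Walk.support_append, List.nodup_append]
  refine ⟨hp.support_nodup, hq.support_nodup.tail, fun z hz y hy hzy => ?_⟩
  have hb : b ∉ q.support.tail := by
    have := hq.support_nodup
    rw [← q.cons_tail_support] at this
    exact (List.nodup_cons.1 this).1
  subst hzy
  exact hb (h z hz (List.mem_of_mem_tail hy) ▸ hy)

theorem Walk.IsPath.exists_of_sup_edge {p : (G ⊔ edge a b).Walk a b} (hp : p.IsPath)
    (hlen : 2 ≤ p.length) :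
    ∃ q : G.Walk a b, q.IsPath ∧ q.support = p.support ∧ q.length = p.length := by
  have hab : s(a, b) ∉ p.edges := by
    cases p with
    | nil => simp
    | cons hadj r =>
      rw [Walk.cons_isPath_iff] at hp
      simp only [Walk.edges_cons, List.mem_cons, Sym2.congr_right]
      rintro (rfl | he)
      · simp [Walk.length_eq_zero_iff.2 (Walk.isPath_iff_nil.1 hp.1)] at hlen
      · exact hp.2 (r.fst_mem_support_of_mem_edges he)
  have hG : ∀ e ∈ p.edges, e ∈ G.edgeSet := by
    intro e he
    have := p.edges_subset_edgeSet he
    rw [edgeSet_sup] at this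
    refine this.resolve_right fun he' => hab ?_
    simp only [edge, edgeSet_fromEdgeSet, Set.mem_sdiff, Set.mem_singleton_iff] at he'
    exact he'.1 ▸ he
  exact ⟨p.transfer G hG, hp.transfer hG, by simp, by simp⟩

namespace TwoConnectedOn

theorem preconnectedOn_sdiff (h : G.TwoConnectedOn s) (w : V) : G.PreconnectedOn (s \ {w}) := by
  by_cases hw : w ∈ s
  · exact h.2.2 w hw
  · rw [Set.sdiff_singleton_eq_self hw]
    exact h.2.1

theorem exists_adj_ne (h : G.TwoConnectedOn s) (ha : a ∈ s) (v : V) :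
    ∃ z ∈ s, G.Adj a z ∧ z ≠ v := by
  obtain ⟨b, hb, hba, hbv⟩ := Set.exists_ne_ne_of_three_le_ncard h.1 a v
  by_cases hav : a = v
  · obtain ⟨z, hz, haz⟩ := (h.2.1 a ha b hb).exists_adj hba.symm
    exact ⟨z, hz, haz, hav ▸ haz.ne.symm⟩
  · obtain ⟨z, hz, haz⟩ := (h.preconnectedOn_sdiff v a ⟨ha, hav⟩ b ⟨hb, hbv⟩).exists_adj hba.symm
    exact ⟨z, hz.1, haz, hz.2⟩

theorem exists_isPath_two_le_length (h : G.TwoConnectedOn s) (ha : a ∈ s) (hb : b ∈ s)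
    (hab : a ≠ b) : ∃ p : G.Walk a b, p.IsPath ∧ (∀ z ∈ p.support, z ∈ s) ∧ 2 ≤ p.length := by
  obtain ⟨z, hz, haz, hzb⟩ := h.exists_adj_ne ha b
  obtain ⟨q, hq, hqs⟩ := (h.2.2 a ha z ⟨hz, haz.ne'⟩ b ⟨hb, hab.symm⟩).exists_isPath
  obtain ⟨p, hp, hps, hlen⟩ := exists_isPath_cons ha haz hq hqs
  have : q.length ≠ 0 := fun h0 => hzb (Walk.eq_of_length_eq_zero h0)
  exact ⟨p, hp, hps, by omega⟩

theorem exists_not_preconnectedOn_sdiff (h : G.TwoConnectedOn s) (hus : u ∈ s)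
    (hs : 4 ≤ s.ncard) (hu : ¬ G.TwoConnectedOn (s \ {u})) :
    ∃ c ∈ s \ {u}, ¬ G.PreconnectedOn ((s \ {u}) \ {c}) := by
  by_contra! h'
  exact hu ⟨by rw [Set.ncard_sdiff_singleton_of_mem hus]; omega, h.2.2 u hus, h'⟩

end TwoConnectedOn

theorem exists_pair_reachableIn_insert_sdiff (h2 : G.TwoConnectedOn s) (huc : u ≠ c)
    (hus : u ∈ s) (hcs : c ∈ s) (hD : D ⊆ (s \ {u}) \ {c})
    (hDcl : ∀ p ∈ D, ∀ q ∈ s, G.Adj p q → q = u ∨ q = c ∨ q ∈ D)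
    (w : V) (he : e ∈ D) (hew : e ≠ w) :
    ∃ z ∈ ({u, c} : Set V) \ {w}, G.ReachableIn (insert z (D \ {w})) e z := by
  obtain ⟨t, htuc, htw⟩ := (Set.nontrivial_pair huc).exists_ne w
  have hts : t ∈ s := by rcases htuc with rfl | rfl <;> assumption
  refine (h2.preconnectedOn_sdiff w e ⟨(hD he).1.1, hew⟩ t ⟨hts, htw⟩).exists_exit ?_
    ⟨he, hew⟩ fun htD => ?_
  · rintro p ⟨hp, -⟩ q ⟨hq, hqw⟩ hpq
    rcases hDcl p hp q hq hpq with rfl | rfl | hqD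
    · exact Or.inr ⟨Or.inl rfl, hqw⟩
    · exact Or.inr ⟨Or.inr rfl, hqw⟩
    · exact Or.inl ⟨hqD, hqw⟩
  · rcases htuc with rfl | rfl
    exacts [(hD htD.1).1.2 rfl, (hD htD.1).2 rfl]

theorem preconnectedOn_sup_edge (h2 : G.TwoConnectedOn s) (huc : u ≠ c) (hus : u ∈ s)
    (hcs : c ∈ s) (hD : D ⊆ (s \ {u}) \ {c})
    (hDcl : ∀ p ∈ D, ∀ q ∈ s, G.Adj p q → q = u ∨ q = c ∨ q ∈ D) (w : V) :
    (G ⊔ edge u c).PreconnectedOn (insert u (insert c D) \ {w}) := by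
  have hpair : ∀ z ∈ ({u, c} : Set V) \ {w}, ∀ z' ∈ ({u, c} : Set V) \ {w},
      (G ⊔ edge u c).ReachableIn (insert u (insert c D) \ {w}) z z' := by
    rintro z ⟨hz, hzw⟩ z' ⟨hz', hz'w⟩
    have hzt : z ∈ insert u (insert c D) \ {w} := ⟨by aesop, hzw⟩
    by_cases hzz : z = z'
    · exact hzz ▸ .refl hzt
    · exact .of_adj (Or.inr (by simp only [edge_adj]; aesop)) hzt ⟨by aesop, hz'w⟩
  obtain ⟨t, ht⟩ := (Set.nontrivial_pair huc).exists_ne w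
  refine .of_forall_reachableIn (a := t) fun e he => ?_
  by_cases heuc : e ∈ ({u, c} : Set V)
  · exact hpair e ⟨heuc, he.2⟩ t ht
  have heD : e ∈ D := by aesop
  obtain ⟨z, hz, hez⟩ := exists_pair_reachableIn_insert_sdiff h2 huc hus hcs hD hDcl w heD he.2
  refine ((hez.mono_graph le_sup_left).mono ?_).trans (hpair z hz t ht)
  exact Set.insert_subset ⟨by aesop, hz.2⟩ fun y hy => ⟨by aesop, hy.2⟩

theorem twoConnectedOn_sup_edge [Finite V] (h2 : G.TwoConnectedOn s) (huc : u ≠ c)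
    (hus : u ∈ s) (hcs : c ∈ s) (hD : D ⊆ (s \ {u}) \ {c})
    (hDcl : ∀ p ∈ D, ∀ q ∈ s, G.Adj p q → q = u ∨ q = c ∨ q ∈ D) (hDne : D.Nonempty) :
    (G ⊔ edge u c).TwoConnectedOn (insert u (insert c D)) := by
  have hpre := preconnectedOn_sup_edge h2 huc hus hcs hD hDcl
  refine ⟨?_, ?_, fun w _ => hpre w⟩
  · have hcD : c ∉ D := fun h => (hD h).2 rfl
    have huD : u ∉ insert c D := by rintro (h | h); exacts [huc h, (hD h).1.2 rfl]
    rw [Set.ncard_insert_of_notMem huD, Set.ncard_insert_of_notMem hcD]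
    have := (Set.ncard_pos).2 hDne
    omega
  · have := (hpre c).insert_of_adj (a := u) (c := c) ⟨Set.mem_insert _ _, huc⟩
      (Or.inr (by simp [edge_adj, huc]))
    rwa [Set.insert_sdiff_singleton, Set.insert_eq_of_mem (by simp)] at this

theorem reachableIn_sdiff_of_closed (h2 : G.TwoConnectedOn s) (huc : u ≠ c) (hus : u ∈ s)
    (hcs : c ∈ s) (hD : D ⊆ (s \ {u}) \ {c})
    (hDcl : ∀ p ∈ D, ∀ q ∈ s, G.Adj p q → q = u ∨ q = c ∨ q ∈ D)
    (hvs : v ∈ s) (hvu : v ≠ u) (hvD : v ∉ D) : G.ReachableIn ((s \ {u}) \ D) c v := by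
  by_cases hvc : v = c
  · exact hvc ▸ .refl ⟨⟨hvs, hvu⟩, hvD⟩
  have hexit : ∀ p ∈ ((s \ {u}) \ D) \ {c}, ∀ q ∈ s \ {u}, G.Adj p q →
      q ∈ ((s \ {u}) \ D) \ {c} ∨ q ∈ ({c} : Set V) := by
    rintro p ⟨⟨hp, hpD⟩, hpc⟩ q hq hpq
    by_cases hqc : q = c
    · exact Or.inr hqc
    refine Or.inl ⟨⟨hq, fun hqD => ?_⟩, hqc⟩
    rcases hDcl q hqD p hp.1 hpq.symm with h | h | h
    exacts [hp.2 h, hpc h, hpD h]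
  obtain ⟨z, hz, hvz⟩ := (h2.2.2 u hus v ⟨hvs, hvu⟩ c ⟨hcs, huc.symm⟩).exists_exit hexit
    ⟨⟨⟨hvs, hvu⟩, hvD⟩, hvc⟩ fun h => h.2 rfl
  rw [Set.mem_singleton_iff.1 hz] at hvz
  have hc : c ∈ (s \ {u}) \ D := ⟨⟨hcs, huc.symm⟩, fun h => (hD h).2 rfl⟩
  exact (hvz.mono (Set.insert_subset hc Set.sdiff_subset)).symm

theorem adj_of_forall_componentIn_eq_singleton (h2 : G.TwoConnectedOn s) (hvs : v ∈ s)
    (huv : u ≠ v) (hnc : ¬ G.PreconnectedOn ((s \ {u}) \ {c}))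
    (hx : ∀ a ∈ (s \ {u}) \ {c}, v ∉ G.componentIn ((s \ {u}) \ {c}) a →
      G.componentIn ((s \ {u}) \ {c}) a = {x}) :
    G.Adj x u ∧ ¬ G.Adj x v := by
  set t := (s \ {u}) \ {c}
  have hxa : ∀ a ∈ t, v ∉ G.componentIn t a → a = x := fun a ha hva => by
    simpa [hx a ha hva] using mem_componentIn_self (G := G) ha
  obtain ⟨a, ha, b, hb, hab⟩ : ∃ a ∈ t, ∃ b ∈ t, ¬ G.ReachableIn t a b := by
    simpa [PreconnectedOn] using hnc
  obtain ⟨a', ha', hva'⟩ : ∃ a' ∈ t, v ∉ G.componentIn t a' := by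
    by_contra! h
    exact hab (ReachableIn.trans (h a ha) (ReachableIn.symm (h b hb)))
  have hxt : x ∈ t := hxa a' ha' hva' ▸ ha'
  have hcx : G.componentIn t x = {x} := hx x hxt (hxa a' ha' hva' ▸ hva')
  have hNx : ∀ q ∈ s, G.Adj x q → q = u ∨ q = c := by
    intro q hq hxq
    by_contra! hne
    have := mem_componentIn_of_adj (mem_componentIn_self hxt) ⟨⟨hq, hne.1⟩, hne.2⟩ hxq
    rw [hcx] at this
    exact G.ne_of_adj hxq this.symm
  constructor
  · obtain ⟨z, hz, hxz, hzc⟩ := h2.exists_adj_ne hxt.1.1 c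
    exact (hNx z hz hxz).resolve_right hzc ▸ hxz
  · intro hxv
    obtain rfl : v = c := (hNx v hvs hxv).resolve_left huv.symm
    have hv : ∀ a, v ∉ G.componentIn t a := fun a h => (componentIn_subset h).2 rfl
    rw [hxa a ha (hv a), hxa b hb (hv b)] at hab
    exact hab (.refl hxt)

section LongPaths

variable [Finite V]

theorem exists_long_path_within_closed
    (IH : ∀ t : Set V, t.ncard < s.ncard → ∀ H : SimpleGraph V, H.TwoConnectedOn t →
      H.HasLongPaths t x)
    (h2 : G.TwoConnectedOn s) (huc : u ≠ c) (hus : u ∈ s) (hcs : c ∈ s)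
    (hD : D ⊆ (s \ {u}) \ {c}) (hDcl : ∀ p ∈ D, ∀ q ∈ s, G.Adj p q → q = u ∨ q = c ∨ q ∈ D)
    (hdeg : ∀ y ∈ D, y ≠ x → k ≤ (G.neighborSet y ∩ s).ncard) (hk : 2 ≤ k)
    (hd : d ∈ D) (hdx : d ≠ x) (hw : w ∈ s \ insert u (insert c D)) :
    ∃ p : G.Walk u c, p.IsPath ∧ (∀ z ∈ p.support, z ∈ insert u (insert c D)) ∧
      k ≤ p.length := by
  set t := insert u (insert c D)
  have hts : t ⊆ s := Set.insert_subset hus (Set.insert_subset hcs fun y hy => (hD hy).1.1)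
  have hN : ∀ y ∈ D, G.neighborSet y ∩ s ⊆ (G ⊔ edge u c).neighborSet y ∩ t := by
    rintro y hy q ⟨hyq, hq⟩
    exact ⟨Or.inl hyq, by rcases hDcl y hy q hq hyq with rfl | rfl | h <;> simp [t, *]⟩
  have hkt : k + 1 ≤ t.ncard := by
    have hsub : G.neighborSet d ∩ s ⊆ t \ {d} :=
      fun q hq => ⟨(hN d hd hq).2, (G.ne_of_adj hq.1).symm⟩
    have hdt : d ∈ t := by simp [t, hd]
    have := (hdeg d hd hdx).trans (Set.ncard_le_ncard hsub)
    rw [Set.ncard_sdiff_singleton_of_mem hdt] at this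
    have := (Set.ncard_pos).2 ⟨d, hdt⟩
    omega
  have hdeg' : ∀ y ∈ t, y ≠ u → y ≠ c → y ≠ x →
      k ≤ ((G ⊔ edge u c).neighborSet y ∩ t).ncard := by
    intro y hy hyu hyc hyx
    have hyD : y ∈ D := by simpa [t, hyu, hyc] using hy
    exact (hdeg y hyD hyx).trans (Set.ncard_le_ncard (hN y hyD))
  obtain ⟨p, hp, hpt, hlen⟩ :=
    IH t (Set.ncard_lt_ncard ((Set.ssubset_iff_of_subset hts).2 ⟨w, hw⟩)) _
      (twoConnectedOn_sup_edge h2 huc hus hcs hD hDcl ⟨d, hd⟩) k u c (by simp [t])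
      (by simp [t]) huc hdeg'
  obtain ⟨q, hq, hqs, hql⟩ := hp.exists_of_sup_edge (by omega)
  exact ⟨q, hq, hqs ▸ hpt, by omega⟩

theorem exists_long_path_of_closed
    (IH : ∀ t : Set V, t.ncard < s.ncard → ∀ H : SimpleGraph V, H.TwoConnectedOn t →
      H.HasLongPaths t x)
    (h2 : G.TwoConnectedOn s) (huc : u ≠ c) (hus : u ∈ s) (hcs : c ∈ s)
    (hD : D ⊆ (s \ {u}) \ {c}) (hDcl : ∀ p ∈ D, ∀ q ∈ s, G.Adj p q → q = u ∨ q = c ∨ q ∈ D)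
    (hdeg : ∀ y ∈ D, y ≠ x → k ≤ (G.neighborSet y ∩ s).ncard) (hk : 2 ≤ k)
    (hd : d ∈ D) (hdx : d ≠ x) (hw : w ∈ s \ insert u (insert c D))
    (hvs : v ∈ s) (hvu : v ≠ u) (hvD : v ∉ D) :
    ∃ p : G.Walk u v, p.IsPath ∧ (∀ z ∈ p.support, z ∈ s) ∧ k ≤ p.length := by
  obtain ⟨p, hp, hpt, hlen⟩ :=
    exists_long_path_within_closed IH h2 huc hus hcs hD hDcl hdeg hk hd hdx hw
  obtain ⟨q, hq, hqs⟩ :=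
    (reachableIn_sdiff_of_closed h2 huc hus hcs hD hDcl hvs hvu hvD).exists_isPath
  have hps : ∀ z ∈ p.support, z ∈ s := fun z hz => by
    rcases hpt z hz with rfl | rfl | hzD
    exacts [hus, hcs, (hD hzD).1.1]
  refine ⟨p.append q, hp.append hq fun z hzp hzq => ?_, fun z hz => ?_,
    by simp only [Walk.length_append]; omega⟩
  · rcases hpt z hzp with rfl | rfl | hzD
    exacts [absurd rfl (hqs z hzq).1.2, rfl, absurd hzD (hqs z hzq).2]
  · rcases (Walk.mem_support_append_iff _ _).1 hz with hz | hz
    exacts [hps z hz, (hqs z hz).1.1]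

theorem exists_long_path_of_twoConnectedOn_sdiff
    (IH : ∀ t : Set V, t.ncard < s.ncard → ∀ H : SimpleGraph V, H.TwoConnectedOn t →
      H.HasLongPaths t x)
    (h2 : G.TwoConnectedOn s) (hus : u ∈ s) (hvs : v ∈ s) (huv : u ≠ v)
    (hdeg : ∀ y ∈ s, y ≠ u → y ≠ v → y ≠ x → k ≤ (G.neighborSet y ∩ s).ncard)
    (hu : G.TwoConnectedOn (s \ {u})) :
    ∃ p : G.Walk u v, p.IsPath ∧ (∀ z ∈ p.support, z ∈ s) ∧ min k (s.ncard - 1) ≤ p.length := by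
  obtain ⟨u', hu's, huu', hu'v⟩ := h2.exists_adj_ne hus v
  have hdeg' : ∀ y ∈ s \ {u}, y ≠ u' → y ≠ v → y ≠ x →
      k - 1 ≤ (G.neighborSet y ∩ (s \ {u})).ncard := by
    intro y hy _ hyv hyx
    rw [← Set.inter_sdiff_assoc]
    have := Set.pred_ncard_le_ncard_sdiff_singleton (G.neighborSet y ∩ s) u
    have := hdeg y hy.1 hy.2 hyv hyx
    omega
  obtain ⟨q, hq, hqs, hlen⟩ := IH _ (Set.ncard_sdiff_singleton_lt_of_mem hus) G hu (k - 1) u' v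
    ⟨hu's, huu'.ne'⟩ ⟨hvs, huv.symm⟩ hu'v hdeg'
  obtain ⟨p, hp, hps, hpl⟩ := exists_isPath_cons hus huu' hq hqs
  rw [Set.ncard_sdiff_singleton_of_mem hus] at hlen
  have := h2.1
  exact ⟨p, hp, hps, by omega⟩

theorem exists_long_path_of_componentIn
    (IH : ∀ t : Set V, t.ncard < s.ncard → ∀ H : SimpleGraph V, H.TwoConnectedOn t →
      H.HasLongPaths t x)
    (h2 : G.TwoConnectedOn s) (hus : u ∈ s) (hvs : v ∈ s) (huv : u ≠ v)
    (hdeg : ∀ y ∈ s, y ≠ u → y ≠ v → y ≠ x → k ≤ (G.neighborSet y ∩ s).ncard) (hk : 2 ≤ k)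
    (hcs : c ∈ s) (hcu : c ≠ u) (hnc : ¬ G.PreconnectedOn ((s \ {u}) \ {c}))
    (ha : a ∈ (s \ {u}) \ {c}) (hva : v ∉ G.componentIn ((s \ {u}) \ {c}) a)
    (hax : G.componentIn ((s \ {u}) \ {c}) a ≠ {x}) :
    ∃ p : G.Walk u v, p.IsPath ∧ (∀ z ∈ p.support, z ∈ s) ∧ k ≤ p.length := by
  set t := (s \ {u}) \ {c}
  set D := G.componentIn t a
  have hD : D ⊆ t := componentIn_subset
  obtain ⟨w, hwt, hwD⟩ : ∃ w ∈ t, w ∉ D := by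
    by_contra! h
    exact hnc fun p hp q hq => ReachableIn.trans (ReachableIn.symm (h p hp)) (h q hq)
  have hw : w ∈ s \ insert u (insert c D) := by
    refine ⟨hwt.1.1, ?_⟩
    rintro (h | h | h)
    exacts [hwt.1.2 h, hwt.2 h, hwD h]
  obtain ⟨d, hd, hdx⟩ : ∃ d ∈ D, d ≠ x := by
    by_contra! h
    have haD := mem_componentIn_self (G := G) ha
    exact hax (Set.eq_singleton_iff_unique_mem.2 ⟨h a haD ▸ haD, h⟩)
  have hDcl : ∀ p ∈ D, ∀ q ∈ s, G.Adj p q → q = u ∨ q = c ∨ q ∈ D := by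
    intro p hp q hq hpq
    by_cases hqu : q = u
    · exact .inl hqu
    by_cases hqc : q = c
    · exact .inr (.inl hqc)
    exact .inr (.inr (mem_componentIn_of_adj hp ⟨⟨hq, hqu⟩, hqc⟩ hpq))
  exact exists_long_path_of_closed IH h2 hcu.symm hus hcs hD hDcl
    (fun y hy hyx => hdeg y (hD hy).1.1 (hD hy).1.2 (fun h => hva (h ▸ hy)) hyx) hk hd hdx
    hw hvs huv.symm hva

theorem exists_long_path_or_adj
    (IH : ∀ t : Set V, t.ncard < s.ncard → ∀ H : SimpleGraph V, H.TwoConnectedOn t →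
      H.HasLongPaths t x)
    (h2 : G.TwoConnectedOn s) (hus : u ∈ s) (hvs : v ∈ s) (huv : u ≠ v)
    (hdeg : ∀ y ∈ s, y ≠ u → y ≠ v → y ≠ x → k ≤ (G.neighborSet y ∩ s).ncard)
    (hk : 2 ≤ k) (hs : 4 ≤ s.ncard) :
    (∃ p : G.Walk u v, p.IsPath ∧ (∀ z ∈ p.support, z ∈ s) ∧ min k (s.ncard - 1) ≤ p.length) ∨
      (G.Adj x u ∧ ¬ G.Adj x v) := by
  by_cases hu : G.TwoConnectedOn (s \ {u})
  · exact .inl (exists_long_path_of_twoConnectedOn_sdiff IH h2 hus hvs huv hdeg hu)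
  obtain ⟨c, ⟨hcs, hcu⟩, hnc⟩ := h2.exists_not_preconnectedOn_sdiff hus hs hu
  by_cases hgood : ∃ a ∈ (s \ {u}) \ {c}, v ∉ G.componentIn ((s \ {u}) \ {c}) a ∧
      G.componentIn ((s \ {u}) \ {c}) a ≠ {x}
  · obtain ⟨a, ha, hva, hax⟩ := hgood
    obtain ⟨p, hp, hps, hlen⟩ :=
      exists_long_path_of_componentIn IH h2 hus hvs huv hdeg hk hcs hcu hnc ha hva hax
    exact .inl ⟨p, hp, hps, (min_le_left _ _).trans hlen⟩
  · push Not at hgood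
    exact .inr (adj_of_forall_componentIn_eq_singleton h2 hvs huv hnc hgood)

theorem TwoConnectedOn.hasLongPaths (h2 : G.TwoConnectedOn s) (x : V) : G.HasLongPaths s x := by
  induction hn : s.ncard using Nat.strong_induction_on generalizing G s with
  | _ n ih =>
    have IH : ∀ t : Set V, t.ncard < s.ncard → ∀ H : SimpleGraph V, H.TwoConnectedOn t →
        H.HasLongPaths t x :=
      fun t ht H hH => ih _ (hn ▸ ht) hH rfl
    intro k u v hus hvs huv hdeg
    by_cases hsmall : min k (s.ncard - 1) ≤ 2
    · obtain ⟨p, hp, hps, hlen⟩ := h2.exists_isPath_two_le_length hus hvs huv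
      exact ⟨p, hp, hps, hsmall.trans hlen⟩
    have hk : 2 ≤ k := by omega
    have hs : 4 ≤ s.ncard := by omega
    rcases exists_long_path_or_adj IH h2 hus hvs huv hdeg hk hs with hpath | ⟨hxu, -⟩
    · exact hpath
    rcases exists_long_path_or_adj IH h2 hvs hus huv.symm
      (fun y hy hyv hyu => hdeg y hy hyu hyv) hk hs with ⟨p, hp, hps, hlen⟩ | ⟨-, hxu'⟩
    · exact ⟨p.reverse, hp.reverse, by simpa using hps, by simpa using hlen⟩
    · exact absurd hxu hxu'

end LongPaths

end SimpleGraph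

theorem TwoConnected.twoConnectedOn_univ {V : Type*} [Fintype V] {G : SimpleGraph V}
    (hG : TwoConnected G) : G.TwoConnectedOn Set.univ := by
  obtain ⟨hcard, hconn, hdel⟩ := hG
  refine ⟨by rwa [Set.ncard_univ, Nat.card_eq_fintype_card], fun a _ b _ => ?_, fun c _ => ?_⟩
  · obtain ⟨p⟩ := hconn.preconnected a b
    exact ⟨p, fun _ _ => trivial⟩
  · intro a ha b hb
    obtain ⟨p, hp⟩ := (Subgraph.preconnected_iff_forall_exists_walk_subgraph
      ((⊤ : G.Subgraph).deleteVerts {c})).1 ⟨(hdel c).preconnected⟩ (u := a) (v := b)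
      (by simpa using ha.2) (by simpa using hb.2)
    refine ⟨p, fun z hz => ?_⟩
    simpa using Subgraph.verts_mono hp ((p.mem_verts_toSubgraph).2 hz)

/-- Let `G` be a 2-connected graph and `x` a vertex of `G`. If every vertex `y ≠ x` has
degree at least `δ`, then every two distinct vertices `u` and `v` are joined in `G` by a
path of order at least `δ + 1`. -/
theorem long_path_of_min_degree_except_one {V : Type*} [Fintype V] (G : SimpleGraph V)
    [DecidableRel G.Adj] (hG : TwoConnected G) (x : V) (δ : ℕ)
    (hdeg : ∀ y : V, y ≠ x → δ ≤ G.degree y)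
    (u v : V) (huv : u ≠ v) :
    ∃ P : G.Walk u v, P.IsPath ∧ δ + 1 ≤ P.length + 1 := by
  have hdeg' : ∀ y ∈ Set.univ, y ≠ u → y ≠ v → y ≠ x →
      δ ≤ (G.neighborSet y ∩ Set.univ).ncard := fun y _ _ _ hyx => by
    rw [Set.inter_univ, Set.ncard_eq_toFinset_card', Set.toFinset_card,
      card_neighborSet_eq_degree]
    exact hdeg y hyx
  obtain ⟨P, hP, -, hlen⟩ :=
    hG.twoConnectedOn_univ.hasLongPaths x δ u v trivial trivial huv hdeg'
  have : Nontrivial V := Fintype.one_lt_card_iff_nontrivial.1 (by have := hG.1; omega)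
  obtain ⟨y, hyx⟩ := exists_ne x
  have := G.degree_lt_card_verts y
  have := hdeg y hyx
  rw [Set.ncard_univ, Nat.card_eq_fintype_card] at hlen
  exact ⟨P, hP, by omega⟩
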